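/- arXiv:1312.0278 — 3 statements merged into one kernel-verified Lean document; each statement's English description precedes it below -/
import Mathlib

section
/- For any natural numbers N ≥ 1 and d ≥ 1, the series ∑_{m ∈ Σ_{d,N}} 1/m converges (has a finite value), where Σ_{d,N} is the set of natural numbers expressible as a sum of exactly d elements of Π_N. -/
/-!
Write `m ∈ Σ_{d,N}` as `m = a₁ + ⋯ + a_d` with `aᵢ ∈ Π_N`. By AM-GM,
`(a₁ ⋯ a_d)^{1/d} ≤ m`, so `1/m ≤ ∏ aᵢ^{-1/d}`. Summed over all `d`-tuples of `N`-smooth numbers,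
the right-hand side is `(∑_{a ∈ Π_N} a^{-1/d})^d`, and `∑_{a ∈ Π_N} a^{-s}` is the finite Euler
product `∏_{p ≤ N} (1 - p^{-s})⁻¹` for every `s > 0`.
-/

/-- `IsSmooth N m` : `m` is a positive natural number all of whose prime factors are `≤ N`,
i.e. `m ∈ Π_N`. -/
def IsSmooth (N m : ℕ) : Prop := 0 < m ∧ ∀ p : ℕ, p.Prime → p ∣ m → p ≤ N

/-- `SigmaSet d N` = `Σ_{d,N}`, sums of exactly `d` elements of `Π_N`. -/
def SigmaSet (d N : ℕ) : Set ℕ :=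
  {m | ∃ f : Fin d → ℕ, (∀ i, IsSmooth N (f i)) ∧ ∑ i, f i = m}

open Finset Function

lemma isSmooth_iff_mem_smoothNumbers {N m : ℕ} : IsSmooth N m ↔ m ∈ Nat.smoothNumbers (N + 1) := by
  simp only [IsSmooth, Nat.mem_smoothNumbers', Nat.lt_succ_iff]
  refine ⟨And.right, fun h ↦ ⟨Nat.pos_of_ne_zero fun h0 ↦ ?_, h⟩⟩
  obtain ⟨p, hpN, hp⟩ := Nat.exists_infinite_primes (N + 1)
  exact (h p hp (h0 ▸ dvd_zero p)).not_gt hpN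

lemma summable_rpow_neg_smoothNumbers (N : ℕ) {s : ℝ} (hs : 0 < s) :
    Summable fun m : Nat.smoothNumbers N ↦ ((m : ℕ) : ℝ) ^ (-s) := by
  let f : ℕ →* ℝ :=
    { toFun n := (n : ℝ) ^ (-s)
      map_one' := by simp
      map_mul' m n := by push_cast; exact Real.mul_rpow m.cast_nonneg n.cast_nonneg }
  have hf (p : ℕ) (hp : p.Prime) : ‖f p‖ < 1 := by
    change ‖(p : ℝ) ^ (-s)‖ < 1
    rw [Real.norm_of_nonneg (Real.rpow_nonneg p.cast_nonneg _)]
    exact Real.rpow_lt_one_of_one_lt_of_neg (by exact_mod_cast hp.one_lt) (neg_neg_of_pos hs)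
  exact (EulerProduct.summable_and_hasSum_smoothNumbers_prod_primesBelow_geometric
    (fun hp ↦ hf _ hp) N).1.of_norm

lemma summable_pi_fin_prod_of_nonneg {α : Type*} {g : α → ℝ} (hg : Summable g) (hg₀ : 0 ≤ g) :
    ∀ d : ℕ, Summable fun f : Fin d → α ↦ ∏ i, g (f i)
  | 0 => .of_finite
  | d + 1 => by
    have h := (hg.mul_of_nonneg (summable_pi_fin_prod_of_nonneg hg hg₀ d) hg₀
      fun f ↦ prod_nonneg fun i _ ↦ hg₀ _)
    refine ((Fin.consEquiv fun _ ↦ α).symm.summable_iff.mpr h).congr fun f ↦ ?_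
    simp [Fin.consEquiv, Fin.prod_univ_succ, Fin.tail]

lemma inv_sum_le_prod_rpow_neg {ι : Type*} [Fintype ι] [Nonempty ι] {z : ι → ℝ}
    (hz : ∀ i, 0 < z i) : (∑ i, z i)⁻¹ ≤ ∏ i, z i ^ (-(Fintype.card ι : ℝ)⁻¹) := by
  have hn : (0 : ℝ) < Fintype.card ι := by exact_mod_cast Fintype.card_pos
  have amgm : ∏ i, z i ^ (Fintype.card ι : ℝ)⁻¹ ≤ ∑ i, z i :=
    calc ∏ i, z i ^ (Fintype.card ι : ℝ)⁻¹
        ≤ ∑ i, (Fintype.card ι : ℝ)⁻¹ * z i :=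
          Real.geom_mean_le_arith_mean_weighted _ _ _ (fun _ _ ↦ by positivity)
            (by simp [hn.ne']) fun i _ ↦ (hz i).le
      _ = (Fintype.card ι : ℝ)⁻¹ * ∑ i, z i := (mul_sum ..).symm
      _ ≤ ∑ i, z i := by
          refine mul_le_of_le_one_left (sum_nonneg fun i _ ↦ (hz i).le) (inv_le_one_of_one_le₀ ?_)
          exact_mod_cast Fintype.card_pos
  simp_rw [Real.rpow_neg (hz _).le, prod_inv_distrib]
  exact inv_anti₀ (prod_pos fun i _ ↦ Real.rpow_pos_of_pos (hz i) _) amgm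

lemma Summable.of_nonneg_of_le_comp_surjective {β γ : Type*} {f : γ → ℝ} {g : β → ℝ}
    {φ : β → γ} (hφ : Surjective φ) (hg : Summable g) (hf : 0 ≤ f) (hfg : ∀ b, f (φ b) ≤ g b) :
    Summable f :=
  (hg.comp_injective (injective_surjInv hφ)).of_nonneg_of_le hf fun c ↦ by
    simpa only [comp_apply, surjInv_eq hφ c] using hfg (surjInv hφ c)

lemma sigmaSet_eq_range (d N : ℕ) :
    SigmaSet d N = Set.range fun f : Fin d → Nat.smoothNumbers (N + 1) ↦ ∑ i, (f i : ℕ) := by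
  ext m
  constructor
  · rintro ⟨f, hf, rfl⟩
    exact ⟨fun i ↦ ⟨f i, isSmooth_iff_mem_smoothNumbers.mp (hf i)⟩, rfl⟩
  · rintro ⟨f, rfl⟩
    exact ⟨fun i ↦ f i, fun i ↦ isSmooth_iff_mem_smoothNumbers.mpr (f i).2, rfl⟩

theorem summable_inv_sigmaSet_general (N d : ℕ) (hd : 1 ≤ d) :
    Summable (fun m : SigmaSet d N => (1 : ℝ) / (m : ℕ)) := by
  have : Nonempty (Fin d) := Fin.pos_iff_nonempty.mp hd
  have hs : (0 : ℝ) < (d : ℝ)⁻¹ := by positivity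
  let φ : (Fin d → Nat.smoothNumbers (N + 1)) → SigmaSet d N :=
    fun f ↦ ⟨∑ i, (f i : ℕ), sigmaSet_eq_range d N ▸ Set.mem_range_self f⟩
  have hφ : Surjective φ := by
    rintro ⟨m, hm⟩
    rw [sigmaSet_eq_range] at hm
    obtain ⟨f, rfl⟩ := hm
    exact ⟨f, rfl⟩
  refine .of_nonneg_of_le_comp_surjective hφ
    (summable_pi_fin_prod_of_nonneg (summable_rpow_neg_smoothNumbers (N + 1) hs)
      (fun m ↦ Real.rpow_nonneg m.1.cast_nonneg _) d)
    (fun m ↦ by positivity) fun f ↦ ?_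
  have hf (i : Fin d) : (0 : ℝ) < (f i : ℕ) :=
    Nat.cast_pos.mpr (Nat.pos_of_ne_zero (Nat.ne_zero_of_mem_smoothNumbers (f i).2))
  simpa [φ, one_div] using inv_sum_le_prod_rpow_neg hf

theorem summable_inv_sigmaSet (N d : ℕ) (hN : 1 ≤ N) (hd : 1 ≤ d) :
    Summable (fun m : SigmaSet d N => (1 : ℝ) / (m : ℕ)) :=
  summable_inv_sigmaSet_general N d hd
end

section
/- Let π : (B,j) → (A,i) be a covering of finite edge-indexed graphs where (A,i) is a 3-cycle with vertices v_1,v_2,v_3 and directed edges e_1 (v_1→v_2), e_2 (v_2→v_3), e_3 (v_3→v_1) with i(e_l) = p_l ≥ 3 and i(ē_l) = 2 for all l. Suppose that for each l and each vertex v ∈ π^{-1}(v_l), at least 3 lifts of e_l start at v. Then no such covering exists, i.e., B must be empty, contradicting surjectivity. -/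
/-- A graph in the sense of Serre. -/
structure GraphData (V E : Type) where
  bar : E → E
  bar_invol : ∀ e, bar (bar e) = e
  bar_ne : ∀ e, bar e ≠ e
  ini : E → V

/-- The 3-cycle: vertices `ZMod 3`; edge `(l, false)` is `e_l : v_l → v_{l+1}` and
`(l, true)` is its inverse `ē_l`. -/
def triangleGraph : GraphData (ZMod 3) (ZMod 3 × Bool) where
  bar e := (e.1, !e.2)
  bar_invol e := by simp
  bar_ne e := by simp [Prod.ext_iff]
  ini e := if e.2 then e.1 + 1 else e.1

/-!
Count the lifts of `e_l` in two ways. Every vertex over `v_l` emits at least three of them, so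
there are at least `3 |π⁻¹ v_l|`. Edge reversal matches them with the lifts of `ē_l`, and since
`i(ē_l) = 2` and all indices are positive, each vertex over `v_{l+1}` emits at most two of
those, so there are at most `2 |π⁻¹ v_{l+1}|`. Summing `3 |π⁻¹ v_l| ≤ 2 |π⁻¹ v_{l+1}|` around
the cycle gives `3 |VB| ≤ 2 |VB|`, so all fibres are empty, contradicting surjectivity.
-/

open Finset

namespace GraphData

variable {VB EB VA EA : Type} [Fintype EB] [DecidableEq EA] {GB : GraphData VB EB}
  {GA : GraphData VA EA} {pV : VB → VA} {pE : EB → EA}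

theorem card_preimage_bar (hbar : ∀ f, pE (GB.bar f) = GA.bar (pE f)) (e : EA) :
    #{f | pE f = GA.bar e} = #{f | pE f = e} := by
  refine card_bij' (fun f _ ↦ GB.bar f) (fun f _ ↦ GB.bar f) ?_ ?_
    (fun f _ ↦ GB.bar_invol f) (fun f _ ↦ GB.bar_invol f)
  · intro f hf
    simp only [mem_filter_univ] at hf ⊢
    rw [hbar, hf, GA.bar_invol]
  · intro f hf
    simp only [mem_filter_univ] at hf ⊢
    rw [hbar, hf]

theorem filter_ini_filter_preimage [DecidableEq VB] (e : EA) (v : VB) :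
    (univ.filter (pE · = e)).filter (GB.ini · = v) =
      univ.filter (fun f ↦ GB.ini f = v ∧ pE f = e) := by
  rw [filter_filter]
  simp only [and_comm]

variable [Fintype VB] [DecidableEq VA] (hini : ∀ f, pV (GB.ini f) = GA.ini (pE f))
include hini

theorem ini_mem_preimage_ini (e : EA) :
    ∀ f ∈ univ.filter (pE · = e), GB.ini f ∈ univ.filter (pV · = GA.ini e) := by
  intro f hf
  simp only [mem_filter_univ] at hf ⊢
  rw [hini, hf]

variable [DecidableEq VB]

theorem mul_card_preimage_ini_le_card_preimage {e : EA} {k : ℕ}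
    (hk : ∀ v, pV v = GA.ini e → k ≤ #{f | GB.ini f = v ∧ pE f = e}) :
    k * #{v | pV v = GA.ini e} ≤ #{f | pE f = e} := by
  refine mul_card_image_le_card_of_maps_to (ini_mem_preimage_ini hini e) k fun v hv ↦ ?_
  rw [filter_ini_filter_preimage]
  exact hk v ((mem_filter_univ v).mp hv)

theorem card_preimage_le_mul_card_preimage_ini {e : EA} {k : ℕ}
    (hk : ∀ v, pV v = GA.ini e → #{f | GB.ini f = v ∧ pE f = e} ≤ k) :
    #{f | pE f = e} ≤ k * #{v | pV v = GA.ini e} := by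
  refine card_le_mul_card_image_of_maps_to (ini_mem_preimage_ini hini e) k fun v hv ↦ ?_
  rw [filter_ini_filter_preimage]
  exact hk v ((mem_filter_univ v).mp hv)

end GraphData

theorem Finset.card_le_sum_of_pos {α : Type*} (s : Finset α) {j : α → ℕ}
    (hj : ∀ a ∈ s, 0 < j a) : #s ≤ ∑ a ∈ s, j a := by
  simpa using s.card_nsmul_le_sum j 1 hj

theorem eq_zero_of_forall_mul_le_mul_add {G : Type*} [AddGroup G] [Fintype G] {N : G → ℕ}
    {a b : ℕ} (hba : b < a) (g : G) (h : ∀ x, a * N x ≤ b * N (x + g)) (x : G) : N x = 0 := by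
  have hsum : a * ∑ y, N y ≤ b * ∑ y, N y :=
    calc a * ∑ y, N y ≤ ∑ y, b * N (y + g) := by rw [mul_sum]; exact sum_le_sum fun y _ ↦ h y
      _ = b * ∑ y, N y := by
        rw [← mul_sum]
        exact congrArg (b * ·) (Equiv.sum_comp (Equiv.addRight g) N)
  have hzero : ∑ y, N y = 0 :=
    Nat.eq_zero_of_not_pos fun hpos ↦ (Nat.mul_lt_mul_of_pos_right hba hpos).not_ge hsum
  exact (sum_eq_zero_iff.mp hzero) x (mem_univ x)

open Finset in
theorem no_triangle_covering_with_three_lifts_general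
    (p : ZMod 3 → ℕ)
    (VB EB : Type) [Fintype VB] [Fintype EB] [DecidableEq VB]
    (GB : GraphData VB EB)
    (j : EB → ℕ) (hj : ∀ f, 0 < j f)
    (pV : VB → ZMod 3) (pE : EB → ZMod 3 × Bool)
    (hsurjV : Function.Surjective pV)
    (hini : ∀ f, pV (GB.ini f) = triangleGraph.ini (pE f))
    (hbar : ∀ f, pE (GB.bar f) = triangleGraph.bar (pE f))
    (hcov : ∀ (v : VB) (e : ZMod 3 × Bool), triangleGraph.ini e = pV v →
      ∑ f ∈ univ.filter (fun f => GB.ini f = v ∧ pE f = e), j f =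
        (if e.2 then 2 else p e.1))
    (hlifts : ∀ (l : ZMod 3) (v : VB), pV v = l →
      3 ≤ (univ.filter (fun f => GB.ini f = v ∧ pE f = (l, false))).card) :
    False := by
  have hcontract : ∀ l : ZMod 3, 3 * #{v | pV v = l} ≤ 2 * #{v | pV v = l + 1} := fun l ↦
    calc 3 * #{v | pV v = l}
        ≤ #{f | pE f = (l, false)} :=
          GraphData.mul_card_preimage_ini_le_card_preimage hini fun v hv ↦ hlifts l v hv
      _ = #{f | pE f = (l, true)} := (GraphData.card_preimage_bar hbar (l, false)).symm
      _ ≤ 2 * #{v | pV v = l + 1} :=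
          GraphData.card_preimage_le_mul_card_preimage_ini hini fun v hv ↦
            (card_le_sum_of_pos _ fun f _ ↦ hj f).trans (hcov v (l, true) hv.symm).le
  obtain ⟨v, hv⟩ := hsurjV 0
  have hempty := card_eq_zero.mp (eq_zero_of_forall_mul_le_mul_add (by norm_num) 1 hcontract 0)
  exact (eq_empty_iff_forall_notMem.mp hempty) v ((mem_filter_univ v).mpr hv)

open Finset in
/-- There is no covering of edge-indexed graphs onto the 3-cycle with indices
`i(e_l) = p_l ≥ 3`, `i(ē_l) = 2`, in which every vertex over `v_l` emits at least 3 lifts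
of `e_l`. -/
theorem no_triangle_covering_with_three_lifts
    (p : ZMod 3 → ℕ) (hp : ∀ l, 3 ≤ p l)
    (VB EB : Type) [Fintype VB] [Fintype EB] [DecidableEq VB]
    (GB : GraphData VB EB)
    (j : EB → ℕ) (hj : ∀ f, 0 < j f)
    (pV : VB → ZMod 3) (pE : EB → ZMod 3 × Bool)
    (hsurjV : Function.Surjective pV) (hsurjE : Function.Surjective pE)
    (hini : ∀ f, pV (GB.ini f) = triangleGraph.ini (pE f))
    (hbar : ∀ f, pE (GB.bar f) = triangleGraph.bar (pE f))
    (hcov : ∀ (v : VB) (e : ZMod 3 × Bool), triangleGraph.ini e = pV v →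
      ∑ f ∈ univ.filter (fun f => GB.ini f = v ∧ pE f = e), j f =
        (if e.2 then 2 else p e.1))
    (hlifts : ∀ (l : ZMod 3) (v : VB), pV v = l →
      3 ≤ (univ.filter (fun f => GB.ini f = v ∧ pE f = (l, false))).card) :
    False :=
  no_triangle_covering_with_three_lifts_general p VB EB GB j hj pV pE hsurjV hini hbar hcov hlifts
end

section
/- Let (A,i) and (B,j) be finite connected minimal edge-indexed graphs such that (B,j) is obtained from (A,i) by collapsing a non-loop edge e with i(e) = 1. Then the set of primes dividing some index of (A,i) equals the set of primes dividing some index of (B,j). -/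
section Collapse

variable {V E : Type} [DecidableEq V] (G : GraphData V E) (i : E → ℕ) (e : E)

/-- Edges of the graph obtained by collapsing the non-loop edge `e`. -/
def collapsedEdges : Type := {f : E // f ≠ e ∧ f ≠ G.bar e}

/-- Initial vertex map after collapsing `e` (the vertex `α(e)` is merged into `ω(e)`). -/
def collapsedIni (f : collapsedEdges G e) : V :=
  if G.ini f.1 = G.ini e then G.ini (G.bar e) else G.ini f.1

/-- Indexing after collapsing `e`: indices of edges issuing from `α(e)` get multiplied
by `i(ē)`. -/
def collapsedIdx (f : collapsedEdges G e) : ℕ :=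
  if G.ini f.1 = G.ini e then i f.1 * i (G.bar e) else i f.1

/-- Minimality of an edge-indexed graph (given by an initial-vertex map and an indexing):
no vertex has exactly one outgoing edge, of index 1. -/
def MinimalIdx {V' E' : Type} (ini : E' → V') (idx : E' → ℕ) : Prop :=
  ∀ v : V', ¬ ((∃! f : E', ini f = v) ∧ ∀ f : E', ini f = v → idx f = 1)

end Collapse

/-!
Collapsing keeps every edge other than `e, ē` and only multiplies some indices by `i(ē)`, so
every collapsed index divides `i(f) · i(ē)` and is divisible by `i(f)`. Hence the only prime that
could be lost is one dividing `i(ē)` (as `i(e) = 1`). Minimality of `(A,i)` forces a second edge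
`g ≠ e` at `α(e)`; it is not `ē` because `e` is not a loop, and its new index `i(g) · i(ē)`
retains every prime factor of `i(ē)`.
-/

theorem MinimalIdx.exists_ne_ini_eq {V E : Type} {ini : E → V} {idx : E → ℕ}
    (hmin : MinimalIdx ini idx) {e : E} (he : idx e = 1) : ∃ g, g ≠ e ∧ ini g = ini e := by
  by_contra! honly
  refine hmin (ini e) ⟨⟨e, rfl, fun g hg => ?_⟩, fun g hg => ?_⟩
  · by_contra hge
    exact honly g hge hg
  · obtain rfl | hge := eq_or_ne g e
    · exact he
    · exact absurd hg (honly g hge)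

theorem exists_collapsedEdge_ini_eq {V E : Type} {G : GraphData V E} {i : E → ℕ} {e : E}
    (hloop : G.ini e ≠ G.ini (G.bar e)) (hie : i e = 1) (hmin : MinimalIdx G.ini i) :
    ∃ f : collapsedEdges G e, G.ini f.1 = G.ini e := by
  obtain ⟨g, hge, hg⟩ := hmin.exists_ne_ini_eq hie
  exact ⟨⟨g, hge, fun hgb => hloop (hgb ▸ hg).symm⟩, hg⟩

section Collapse

variable {V E : Type} [DecidableEq V] (G : GraphData V E) (i : E → ℕ) (e : E)

theorem dvd_collapsedIdx (f : collapsedEdges G e) : i f.1 ∣ collapsedIdx G i e f := by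
  unfold collapsedIdx
  split_ifs
  exacts [dvd_mul_right _ _, dvd_rfl]

theorem collapsedIdx_dvd_mul (f : collapsedEdges G e) :
    collapsedIdx G i e f ∣ i f.1 * i (G.bar e) := by
  unfold collapsedIdx
  split_ifs
  exacts [dvd_rfl, dvd_mul_right _ _]

theorem dvd_collapsedIdx_of_ini_eq {f : collapsedEdges G e} (hf : G.ini f.1 = G.ini e) :
    i (G.bar e) ∣ collapsedIdx G i e f := by
  rw [collapsedIdx, if_pos hf]
  exact dvd_mul_left _ _

end Collapse

theorem collapse_preserves_invariant_primes_general
    (V E : Type) [DecidableEq V]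
    (G : GraphData V E) (i : E → ℕ)
    (e : E) (hloop : G.ini e ≠ G.ini (G.bar e)) (hie : i e = 1)
    (hminA : MinimalIdx G.ini i) :
    {p : ℕ | p.Prime ∧ ∃ f : E, p ∣ i f} =
      {p : ℕ | p.Prime ∧ ∃ f : collapsedEdges G e, p ∣ collapsedIdx G i e f} := by
  ext p
  simp only [Set.mem_ofPred_eq, and_congr_right_iff]
  intro hp
  constructor
  · rintro ⟨f, hpf⟩
    by_cases hfe : f = e
    · subst hfe
      exact absurd (Nat.dvd_one.mp (hie ▸ hpf)) hp.ne_one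
    by_cases hfb : f = G.bar e
    · subst hfb
      obtain ⟨g, hg⟩ := exists_collapsedEdge_ini_eq hloop hie hminA
      exact ⟨g, hpf.trans (dvd_collapsedIdx_of_ini_eq G i e hg)⟩
    · exact ⟨⟨f, hfe, hfb⟩, hpf.trans (dvd_collapsedIdx G i e _)⟩
  · rintro ⟨f, hpf⟩
    rcases hp.dvd_mul.mp (hpf.trans (collapsedIdx_dvd_mul G i e f)) with h | h
    exacts [⟨f.1, h⟩, ⟨G.bar e, h⟩]

/-- If minimal edge-indexed graphs `(A,i)` and `(B,j)` are related by collapsing a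
non-loop edge `e` of index `i(e) = 1`, then the sets of primes dividing some edge index
of `(A,i)` and of `(B,j)` coincide. -/
theorem collapse_preserves_invariant_primes
    (V E : Type) [Fintype V] [Fintype E] [DecidableEq V]
    (G : GraphData V E) (i : E → ℕ) (hi : ∀ f, 0 < i f)
    (e : E) (hloop : G.ini e ≠ G.ini (G.bar e)) (hie : i e = 1)
    (hminA : MinimalIdx G.ini i)
    (hminB : MinimalIdx (collapsedIni G e) (collapsedIdx G i e)) :
    {p : ℕ | p.Prime ∧ ∃ f : E, p ∣ i f} =
      {p : ℕ | p.Prime ∧ ∃ f : collapsedEdges G e, p ∣ collapsedIdx G i e f} :=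
  collapse_preserves_invariant_primes_general V E G i e hloop hie hminA
end
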